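/- Let α ≥ 2 and N_α(x) = Σ_{m≥0} (-2x²)^m/(2m)! · (α/2)(α/2-1)···(α/2-m+1). The smallest positive zero s_α of N_α satisfies √(2/α) ≤ s_α ≤ 1. -/

import Mathlib

/-- The confluent hypergeometric function `₁F₁(-α/2, 1/2, x²/2)` given by its power series. -/
noncomputable def Nfun (α : ℝ) (x : ℝ) : ℝ :=
  ∑' m : ℕ, ((-2 * x ^ 2) ^ m / ((2 * m).factorial : ℝ)) * ∏ j ∈ Finset.range m, (α / 2 - j)

/-!
`N = Nfun α` is the even entire solution of `N'' = x N' - α N` with `N 0 = 1`, so that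
`G = e^{-x²/4} N` solves `G'' + (α + 1/2 - x²/4) G = 0`. For `Q = 1 - c x²` the Wronskian of `G`
and `e^{-x²/4} Q` vanishes at `0` and has derivative `e^{-x²/2} N (Q'' - x Q' + α Q)`, whose
sign on `[0, s_α)`, where `N > 0`, is that of `Q'' - x Q' + α Q`.

* `c = 1` (`Q = N` for `α = 2`): the sign is that of `(α - 2)(1 - x²) ≥ 0` on `[0, 1]`, while
  the Wronskian at `1` is `-2 e^{-1/2} N 1`; hence `N` has a zero in `(0, 1]`.
* `c = α/2` (the Taylor polynomial of `N` of degree 2, vanishing at `√(2/α)`): for `α > 2` the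
  sign is negative, so if `α s_α² < 2` the Wronskian at `s_α`, which is
  `-e^{-s_α²/2} N'(s_α) Q(s_α)`, is negative, i.e. `N'(s_α) > 0`; but `N` decreases to its
  first zero.

For `α = 2` the series terminates: `N = 1 - x²`.
-/

open Set Function Real
open scoped Nat

noncomputable def powerSeriesSum (c : ℕ → ℝ) (x : ℝ) : ℝ := ∑' n, c n * x ^ n

def derivCoeff (c : ℕ → ℝ) (n : ℕ) : ℝ := (n + 1) * c (n + 1)

def IsEntireCoeffs (c : ℕ → ℝ) : Prop := ∀ x : ℝ, Summable fun n => |c n * x ^ n|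

lemma powerSeriesSum_zero (c : ℕ → ℝ) : powerSeriesSum c 0 = c 0 := by
  rw [powerSeriesSum, tsum_eq_single 0 fun n hn => by rw [zero_pow hn, mul_zero]]
  simp

namespace IsEntireCoeffs

variable {c : ℕ → ℝ}

lemma summable (hc : IsEntireCoeffs c) (x : ℝ) : Summable fun n => c n * x ^ n :=
  (hc x).of_abs

lemma derivCoeff (hc : IsEntireCoeffs c) : IsEntireCoeffs (derivCoeff c) := by
  intro x
  set y := 2 * |x| + 1
  have hy : 0 ≤ y := by positivity
  refine .of_nonneg_of_le (fun _ => abs_nonneg _) (fun n => ?_)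
    ((summable_nat_add_iff 1).mpr (hc y))
  have hn : (n + 1 : ℝ) * |x| ^ n ≤ y ^ (n + 1) :=
    calc (n + 1 : ℝ) * |x| ^ n ≤ 2 ^ n * |x| ^ n := by
          gcongr; exact_mod_cast Nat.lt_two_pow_self
      _ = (2 * |x|) ^ n := (mul_pow _ _ _).symm
      _ ≤ y ^ n := by gcongr; linarith
      _ ≤ y ^ (n + 1) := pow_le_pow_right₀ (by linarith [abs_nonneg x]) n.le_succ
  calc |_root_.derivCoeff c n * x ^ n| = |c (n + 1)| * ((n + 1) * |x| ^ n) := by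
        rw [_root_.derivCoeff, abs_mul, abs_mul, abs_pow, abs_of_pos n.cast_add_one_pos]; ring
    _ ≤ |c (n + 1)| * y ^ (n + 1) := by gcongr
    _ = |c (n + 1) * y ^ (n + 1)| := by rw [abs_mul, abs_of_nonneg (pow_nonneg hy _)]

lemma hasDerivAt (hc : IsEntireCoeffs c) (x : ℝ) :
    HasDerivAt (powerSeriesSum c) (powerSeriesSum (_root_.derivCoeff c) x) x := by
  set R := |x| + 1
  have hxR : x ∈ Ioo (-R) R := abs_lt.mp (by linarith)
  have hu : Summable fun n : ℕ => |c n| * (n * R ^ (n - 1)) := by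
    rw [← summable_nat_add_iff 1]
    refine (hc.derivCoeff R).congr fun n => ?_
    rw [_root_.derivCoeff, abs_mul, abs_mul, abs_of_pos n.cast_add_one_pos,
      abs_of_nonneg (by positivity : (0 : ℝ) ≤ R ^ n)]
    push_cast
    ring
  have hbound : ∀ n, ∀ y ∈ Ioo (-R) R,
      ‖c n * (n * y ^ (n - 1))‖ ≤ |c n| * (n * R ^ (n - 1)) := by
    intro n y hy
    rw [Real.norm_eq_abs, abs_mul, abs_mul, abs_pow, Nat.abs_cast]
    gcongr
    exact (abs_lt.mpr hy).le
  have hD := hasDerivAt_tsum_of_isPreconnected hu isOpen_Ioo isPreconnected_Ioo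
    (fun n y _ => (hasDerivAt_pow n y).const_mul (c n)) hbound hxR (hc.summable x) hxR
  refine hD.congr_deriv ?_
  rw [Summable.tsum_eq_zero_add (.of_norm_bounded hu fun n => hbound n x hxR)]
  simp only [CharP.cast_eq_zero, zero_mul, mul_zero, zero_add, powerSeriesSum,
    _root_.derivCoeff]
  exact tsum_congr fun n => by push_cast; ring

lemma deriv_powerSeriesSum (hc : IsEntireCoeffs c) :
    deriv (powerSeriesSum c) = powerSeriesSum (_root_.derivCoeff c) :=
  funext fun x => (hc.hasDerivAt x).deriv

lemma summable_natCast_mul (hc : IsEntireCoeffs c) (x : ℝ) :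
    Summable fun n : ℕ => n * c n * x ^ n := by
  rw [← summable_nat_add_iff 1]
  refine ((hc.derivCoeff.summable x).mul_left x).congr fun n => ?_
  rw [_root_.derivCoeff]; push_cast; ring

lemma mul_powerSeriesSum_derivCoeff (hc : IsEntireCoeffs c) (x : ℝ) :
    x * powerSeriesSum (_root_.derivCoeff c) x = ∑' n, n * c n * x ^ n := by
  rw [powerSeriesSum, ← tsum_mul_left, (hc.summable_natCast_mul x).tsum_eq_zero_add]
  simp only [CharP.cast_eq_zero, zero_mul, zero_add, _root_.derivCoeff]
  exact tsum_congr fun n => by push_cast; ring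

end IsEntireCoeffs

lemma extend_two_mul_mul_pow (d : ℕ → ℝ) (x : ℝ) (n : ℕ) :
    extend (2 * ·) d 0 n * x ^ n = extend (2 * ·) (fun m => d m * x ^ (2 * m)) 0 n := by
  have hinj : Injective (2 * · : ℕ → ℕ) := mul_right_injective₀ two_ne_zero
  obtain ⟨m, rfl | rfl⟩ := n.even_or_odd'
  · simp [hinj.extend_apply]
  · have : ¬∃ k, 2 * k = 2 * m + 1 := by omega
    simp [extend_apply' _ _ _ this]

section

open Finset

lemma prod_abs_sub_natCast_le (a : ℝ) (m : ℕ) :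
    ∏ j ∈ range m, |a - j| ≤ (|a| + 1) ^ m * m ! := by
  calc ∏ j ∈ range m, |a - j| ≤ ∏ j ∈ range m, (|a| + 1) * (j + 1 : ℝ) := by
        refine prod_le_prod (fun _ _ => abs_nonneg _) fun j _ => ?_
        have hj := abs_sub a (j : ℝ)
        rw [Nat.abs_cast] at hj
        nlinarith [abs_nonneg a, j.cast_nonneg (α := ℝ)]
    _ = (|a| + 1) ^ m * m ! := by
        rw [prod_mul_distrib, prod_const, card_range, ← prod_range_add_one_eq_factorial]
        push_cast; rfl

lemma factorial_mul_factorial_le_factorial_two_mul (m : ℕ) : m ! * m ! ≤ (2 * m)! :=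
  two_mul m ▸
    Nat.le_of_dvd (Nat.factorial_pos _) (Nat.factorial_mul_factorial_dvd_factorial_add m m)

end

namespace Nfun

open Finset

noncomputable def evenCoeff (α : ℝ) (m : ℕ) : ℝ :=
  (-2) ^ m / (2 * m)! * ∏ j ∈ range m, (α / 2 - j)

noncomputable def coeff (α : ℝ) : ℕ → ℝ := extend (2 * ·) (evenCoeff α) 0

lemma coeff_two_mul (α : ℝ) (m : ℕ) : coeff α (2 * m) = evenCoeff α m :=
  (mul_right_injective₀ two_ne_zero).extend_apply _ _ m

lemma coeff_two_mul_add_one (α : ℝ) (m : ℕ) : coeff α (2 * m + 1) = 0 :=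
  extend_apply' _ _ _ (by omega)

lemma abs_evenCoeff_le (α : ℝ) (m : ℕ) : |evenCoeff α m| ≤ (|α| + 2) ^ m / m ! := by
  have hprod := prod_abs_sub_natCast_le (α / 2) m
  have hfact : (m ! : ℝ) * m ! ≤ (2 * m)! := by
    exact_mod_cast factorial_mul_factorial_le_factorial_two_mul m
  have hm : (0 : ℝ) < m ! := by positivity
  rw [evenCoeff, abs_mul, abs_div, abs_pow, abs_neg, abs_two, Nat.abs_cast, abs_prod,
    div_mul_eq_mul_div, div_le_div_iff₀ (by positivity) hm]
  calc 2 ^ m * (∏ j ∈ range m, |α / 2 - j|) * m !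
        ≤ 2 ^ m * ((|α / 2| + 1) ^ m * m !) * m ! := by gcongr
    _ = (|α| + 2) ^ m * (m ! * m !) := by
        have : (|α| + 2) ^ m = 2 ^ m * (|α| / 2 + 1) ^ m := by rw [← mul_pow]; ring_nf
        rw [abs_div, abs_two, this]; ring
    _ ≤ (|α| + 2) ^ m * (2 * m)! := by gcongr

lemma isEntireCoeffs_coeff (α : ℝ) : IsEntireCoeffs (coeff α) := by
  intro x
  have hterm : ∀ n, |coeff α n * x ^ n| =
      extend (2 * ·) (fun m => |evenCoeff α m * x ^ (2 * m)|) 0 n := fun n => by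
    rw [coeff, extend_two_mul_mul_pow, apply_extend abs]
    congr 1
    exact funext fun _ => abs_zero
  simp_rw [hterm]
  rw [summable_extend_zero (mul_right_injective₀ two_ne_zero)]
  refine .of_nonneg_of_le (fun _ => abs_nonneg _) (fun m => ?_)
    (Real.summable_pow_div_factorial ((|α| + 2) * x ^ 2))
  rw [abs_mul, abs_pow, pow_mul, sq_abs, mul_pow, mul_div_right_comm]
  gcongr
  exact abs_evenCoeff_le α m

lemma derivCoeff_derivCoeff_coeff (α : ℝ) (n : ℕ) :
    derivCoeff (derivCoeff (coeff α)) n = (n - α) * coeff α n := by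
  simp only [derivCoeff]
  obtain ⟨m, rfl | rfl⟩ := n.even_or_odd'
  · rw [show 2 * m + 1 + 1 = 2 * (m + 1) by ring, coeff_two_mul, coeff_two_mul, evenCoeff,
      evenCoeff, prod_range_succ, show 2 * (m + 1) = 2 * m + 1 + 1 by ring,
      Nat.factorial_succ, Nat.factorial_succ]
    push_cast
    field_simp
    ring
  · rw [show 2 * m + 1 + 1 + 1 = 2 * (m + 1) + 1 by ring, coeff_two_mul_add_one,
      coeff_two_mul_add_one]
    ring

lemma eq_powerSeriesSum (α : ℝ) : Nfun α = powerSeriesSum (coeff α) := by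
  funext x
  simp_rw [powerSeriesSum, coeff, extend_two_mul_mul_pow]
  rw [tsum_extend_zero (mul_right_injective₀ two_ne_zero)]
  exact tsum_congr fun m => by rw [evenCoeff, mul_pow, pow_mul]; ring

end Nfun

open Nfun

lemma hasDerivAt_Nfun (α x : ℝ) : HasDerivAt (Nfun α) (deriv (Nfun α) x) x := by
  rw [eq_powerSeriesSum]
  exact ((isEntireCoeffs_coeff α).hasDerivAt x).differentiableAt.hasDerivAt

lemma hasDerivAt_deriv_Nfun (α x : ℝ) :
    HasDerivAt (deriv (Nfun α)) (x * deriv (Nfun α) x - α * Nfun α x) x := by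
  have hc := isEntireCoeffs_coeff α
  rw [eq_powerSeriesSum, hc.deriv_powerSeriesSum]
  convert hc.derivCoeff.hasDerivAt x using 1
  rw [hc.mul_powerSeriesSum_derivCoeff, powerSeriesSum, powerSeriesSum, ← tsum_mul_left,
    ← Summable.tsum_sub _ ((hc.summable x).mul_left α)]
  · exact tsum_congr fun n => by rw [derivCoeff_derivCoeff_coeff]; ring
  · exact hc.summable_natCast_mul x

lemma Nfun_zero (α : ℝ) : Nfun α 0 = 1 := by
  rw [eq_powerSeriesSum, powerSeriesSum_zero, ← mul_zero 2, coeff_two_mul, evenCoeff]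
  simp

lemma deriv_Nfun_zero (α : ℝ) : deriv (Nfun α) 0 = 0 := by
  rw [eq_powerSeriesSum, (isEntireCoeffs_coeff α).deriv_powerSeriesSum, powerSeriesSum_zero,
    derivCoeff, ← mul_zero 2, coeff_two_mul_add_one, mul_zero]

lemma Nfun_two (x : ℝ) : Nfun 2 x = 1 - x ^ 2 := by
  rw [Nfun, tsum_eq_sum (s := Finset.range 2) fun m hm => ?_]
  · norm_num [Finset.sum_range_succ]
    ring
  · have h1 : 1 ∈ Finset.range m := Finset.mem_range.mpr (by simp at hm; omega)
    exact mul_eq_zero_of_right _ (Finset.prod_eq_zero h1 (by norm_num))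

lemma Continuous.pos_of_lt_isLeast_zero {f : ℝ → ℝ} {s x : ℝ} (hf : Continuous f)
    (h0 : 0 < f 0) (hs : IsLeast {x | 0 < x ∧ f x = 0} s) (hx : x ∈ Ico 0 s) : 0 < f x := by
  by_contra! hfx
  obtain ⟨z, hz, hfz⟩ := intermediate_value_Icc' hx.1 hf.continuousOn ⟨hfx, h0.le⟩
  have hz0 : 0 < z := hz.1.lt_of_ne <| by rintro rfl; linarith
  linarith [hs.2 ⟨hz0, hfz⟩, hz.2, hx.2]

lemma HasDerivAt.nonpos_of_forall_Ioo_le {f : ℝ → ℝ} {f' a b : ℝ} (hf : HasDerivAt f f' a)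
    (hb : b < a) (h : ∀ y ∈ Ioo b a, f a ≤ f y) : f' ≤ 0 := by
  refine le_of_tendsto (hasDerivAt_iff_tendsto_slope_left_right.mp hf).1 ?_
  filter_upwards [Ioo_mem_nhdsLT hb] with y hy
  rw [slope_def_field]
  exact div_nonpos_of_nonneg_of_nonpos (sub_nonneg.mpr (h y hy)) (sub_nonpos.mpr hy.2.le)

lemma continuous_Nfun (α : ℝ) : Continuous (Nfun α) :=
  continuous_iff_continuousAt.mpr fun x => (hasDerivAt_Nfun α x).continuousAt

namespace Nfun

/-- The Wronskian of `e^{-y²/4} Nfun α y` and `e^{-y²/4} (1 - c y²)`. -/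
noncomputable def wronskian (α c y : ℝ) : ℝ :=
  exp (-y ^ 2 / 2) * (Nfun α y * (-(2 * c * y)) - deriv (Nfun α) y * (1 - c * y ^ 2))

-- `α - 2 c + c (2 - α) x²` is `Q'' - x Q' + α Q` for `Q = 1 - c x²`.
lemma hasDerivAt_wronskian (α c x : ℝ) :
    HasDerivAt (wronskian α c)
      (exp (-x ^ 2 / 2) * Nfun α x * (α - 2 * c + c * (2 - α) * x ^ 2)) x := by
  have hG : HasDerivAt (fun y => -y ^ 2 / 2) (-x) x :=
    ((hasDerivAt_pow 2 x).fun_neg.div_const 2).congr_deriv (by norm_num; ring)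
  have hQ : HasDerivAt (fun y => 1 - c * y ^ 2) (-(2 * c * x)) x :=
    (((hasDerivAt_pow 2 x).const_mul c).const_sub 1).congr_deriv (by norm_num; ring)
  have hQ' : HasDerivAt (fun y => -(2 * c * y)) (-(2 * c)) x := by
    simpa using ((hasDerivAt_id x).const_mul (2 * c)).fun_neg
  refine (hG.exp.fun_mul (((hasDerivAt_Nfun α x).fun_mul hQ').fun_sub
    ((hasDerivAt_deriv_Nfun α x).fun_mul hQ))).congr_deriv ?_
  ring

lemma wronskian_zero (α c : ℝ) : wronskian α c 0 = 0 := by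
  simp [wronskian, deriv_Nfun_zero]

lemma continuous_wronskian (α c : ℝ) : Continuous (wronskian α c) :=
  continuous_iff_continuousAt.mpr fun x => (hasDerivAt_wronskian α c x).continuousAt

end Nfun

lemma le_one_of_isLeast_Nfun_zero {α s : ℝ} (hα : 2 ≤ α)
    (hs : IsLeast {x | 0 < x ∧ Nfun α x = 0} s) : s ≤ 1 := by
  by_contra! h1
  have hpos : ∀ x ∈ Icc 0 1, 0 < Nfun α x := fun x hx =>
    (continuous_Nfun α).pos_of_lt_isLeast_zero (by rw [Nfun_zero]; exact one_pos) hs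
      ⟨hx.1, hx.2.trans_lt h1⟩
  have hmono : MonotoneOn (wronskian α 1) (Icc 0 1) := by
    refine monotoneOn_of_hasDerivWithinAt_nonneg (convex_Icc 0 1)
      (continuous_wronskian α 1).continuousOn
      (fun x _ => (hasDerivAt_wronskian α 1 x).hasDerivWithinAt) fun x hx => ?_
    rw [interior_Icc] at hx
    have hx2 : 0 ≤ (α - 2) * (1 - x ^ 2) := mul_nonneg (by linarith) (by nlinarith [hx.1, hx.2])
    have := mul_nonneg (mul_pos (exp_pos (-x ^ 2 / 2)) (hpos x (Ioo_subset_Icc_self hx))).le hx2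
    linarith
  have h01 := hmono (left_mem_Icc.mpr zero_le_one) (right_mem_Icc.mpr zero_le_one) zero_le_one
  rw [wronskian_zero, wronskian] at h01
  nlinarith [exp_pos (-1 ^ 2 / 2 : ℝ), hpos 1 (right_mem_Icc.mpr zero_le_one)]

lemma sqrt_two_div_le_of_isLeast_Nfun_zero {α s : ℝ} (hα : 2 < α)
    (hs : IsLeast {x | 0 < x ∧ Nfun α x = 0} s) : √(2 / α) ≤ s := by
  obtain ⟨hs0, hNs⟩ := hs.1
  by_contra! h
  have hQs : 0 < 1 - α / 2 * s ^ 2 := by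
    have := (Real.lt_sqrt hs0.le).mp h
    rw [lt_div_iff₀ (by linarith)] at this
    linarith
  have hpos : ∀ x ∈ Ico 0 s, 0 < Nfun α x := fun x hx =>
    (continuous_Nfun α).pos_of_lt_isLeast_zero (by rw [Nfun_zero]; exact one_pos) hs hx
  have hanti : StrictAntiOn (wronskian α (α / 2)) (Icc 0 s) := by
    refine strictAntiOn_of_hasDerivWithinAt_neg (convex_Icc 0 s)
      (continuous_wronskian α _).continuousOn
      (fun x _ => (hasDerivAt_wronskian α _ x).hasDerivWithinAt) fun x hx => ?_
    rw [interior_Icc] at hx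
    have := mul_pos (mul_pos (exp_pos (-x ^ 2 / 2)) (hpos x (Ioo_subset_Ico_self hx)))
      (mul_pos (by nlinarith : 0 < α * (α - 2)) (pow_pos hx.1 2))
    linarith
  have hW := hanti (left_mem_Icc.mpr hs0.le) (right_mem_Icc.mpr hs0.le) hs0
  have hderiv : deriv (Nfun α) s ≤ 0 := (hasDerivAt_Nfun α s).nonpos_of_forall_Ioo_le hs0
    fun y hy => hNs ▸ (hpos y ⟨hy.1.le, hy.2⟩).le
  rw [wronskian_zero, wronskian, hNs] at hW
  nlinarith [mul_pos (exp_pos (-s ^ 2 / 2)) hQs]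

theorem stmt17 (α : ℝ) (hα : 2 ≤ α) (s : ℝ)
    (hs : IsLeast {x : ℝ | 0 < x ∧ Nfun α x = 0} s) :
    Real.sqrt (2 / α) ≤ s ∧ s ≤ 1 := by
  refine ⟨?_, le_one_of_isLeast_Nfun_zero hα hs⟩
  rcases hα.eq_or_lt with rfl | hα
  · obtain ⟨⟨hs0, hNs⟩, -⟩ := hs
    rw [Nfun_two] at hNs
    have : s = 1 := by nlinarith
    simp [this]
  · exact sqrt_two_div_le_of_isLeast_Nfun_zero hα hs
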